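/- Let N ≥ 1, M > 0, δ ≥ 0. Let D₁ and D₂ be N×N real symmetric matrices with λmin(D₁) ≥ M(1−δ) and λmin(D₂) ≥ M(1−δ), and let E be an N×N real matrix such that the 2N×2N symmetric block matrix [[D₁, Eᵀ],[E, D₂]] satisfies λmax([[D₁,Eᵀ],[E,D₂]]) ≤ M(1+δ). Then ‖E‖ ≤ 2Mδ. -/

import Mathlib

/-!
For unit vectors `x, y`, the quadratic form of `[[D₁, Eᵀ], [E, D₂]]` at `(x, y)` equals
`xᵀD₁x + yᵀD₂y + 2 yᵀEx`. It is at most `2M(1+δ)` since `(x, y)` has squared norm `2`, while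
the diagonal terms are each at least `M(1-δ)`; hence `yᵀEx ≤ 2Mδ`. Taking `y = Ex / ‖Ex‖`
turns this into `‖Ex‖ ≤ 2Mδ`.
-/

open Matrix

/-- Euclidean (ℓ²) norm of a vector in ℝ^n. -/
noncomputable def vecNorm {n : Type*} [Fintype n] (v : n → ℝ) : ℝ :=
  Real.sqrt (∑ i, v i ^ 2)

/-- Spectral norm (largest singular value) of a real matrix, defined as the operator
norm: the supremum of `‖A x‖₂` over unit vectors `x`. -/
noncomputable def matrixSpectralNorm {m n : Type*} [Fintype m] [Fintype n]
    (A : Matrix m n ℝ) : ℝ :=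
  sSup ((fun x => vecNorm (A.mulVec x)) '' {x | vecNorm x = 1})

/-- Smallest eigenvalue of a real symmetric matrix, via the Rayleigh quotient. -/
noncomputable def eigMin {n : Type*} [Fintype n] (S : Matrix n n ℝ) : ℝ :=
  sInf ((fun x => x ⬝ᵥ S.mulVec x) '' {x | vecNorm x = 1})

/-- Largest eigenvalue of a real symmetric matrix, via the Rayleigh quotient. -/
noncomputable def eigMax {n : Type*} [Fintype n] (S : Matrix n n ℝ) : ℝ :=
  sSup ((fun x => x ⬝ᵥ S.mulVec x) '' {x | vecNorm x = 1})

section Rayleigh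

variable {n : Type*} [Fintype n]

lemma vecNorm_eq_sqrt_dotProduct (v : n → ℝ) : vecNorm v = √(v ⬝ᵥ v) := by
  simp only [vecNorm, dotProduct, sq]

lemma vecNorm_eq_one_iff {v : n → ℝ} : vecNorm v = 1 ↔ v ⬝ᵥ v = 1 := by
  rw [vecNorm_eq_sqrt_dotProduct, Real.sqrt_eq_one]

lemma dotProduct_self_eq_vecNorm_sq (v : n → ℝ) : v ⬝ᵥ v = vecNorm v ^ 2 := by
  have : 0 ≤ v ⬝ᵥ v := Finset.sum_nonneg fun i _ => mul_self_nonneg (v i)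
  rw [vecNorm_eq_sqrt_dotProduct, Real.sq_sqrt this]

lemma vecNorm_eq_norm_toLp (v : n → ℝ) :
    vecNorm v = ‖(WithLp.toLp 2 v : EuclideanSpace ℝ n)‖ := by
  simp only [vecNorm, EuclideanSpace.norm_eq, Real.norm_eq_abs, sq_abs]

lemma vecNorm_smul (c : ℝ) (v : n → ℝ) : vecNorm (c • v) = |c| * vecNorm v := by
  rw [vecNorm_eq_norm_toLp, vecNorm_eq_norm_toLp, WithLp.toLp_smul, norm_smul, Real.norm_eq_abs]

lemma vecNorm_inv_smul_self {v : n → ℝ} (hv : vecNorm v ≠ 0) :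
    vecNorm ((vecNorm v)⁻¹ • v) = 1 := by
  have : 0 ≤ vecNorm v := Real.sqrt_nonneg _
  rw [vecNorm_smul, abs_inv, abs_of_nonneg this, inv_mul_cancel₀ hv]

lemma isCompact_setOf_vecNorm_eq_one : IsCompact {x : n → ℝ | vecNorm x = 1} := by
  have : {x : n → ℝ | vecNorm x = 1} =
      WithLp.ofLp '' Metric.sphere (0 : EuclideanSpace ℝ n) 1 := by
    ext x
    simp only [Set.mem_ofPred_eq, Set.mem_image, mem_sphere_zero_iff_norm, vecNorm_eq_norm_toLp]
    exact ⟨fun hx => ⟨WithLp.toLp 2 x, hx, rfl⟩, by rintro ⟨y, hy, rfl⟩; simpa using hy⟩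
  rw [this]
  exact (isCompact_sphere _ _).image (PiLp.continuous_ofLp 2 _)

lemma isCompact_image_rayleigh (S : Matrix n n ℝ) :
    IsCompact ((fun x => x ⬝ᵥ S *ᵥ x) '' {x | vecNorm x = 1}) :=
  isCompact_setOf_vecNorm_eq_one.image (by fun_prop)

lemma eigMin_le_rayleigh (S : Matrix n n ℝ) {x : n → ℝ} (hx : vecNorm x = 1) :
    eigMin S ≤ x ⬝ᵥ S *ᵥ x :=
  csInf_le (isCompact_image_rayleigh S).bddBelow ⟨x, hx, rfl⟩

lemma rayleigh_le_eigMax (S : Matrix n n ℝ) {x : n → ℝ} (hx : vecNorm x = 1) :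
    x ⬝ᵥ S *ᵥ x ≤ eigMax S :=
  le_csSup (isCompact_image_rayleigh S).bddAbove ⟨x, hx, rfl⟩

lemma rayleigh_le_eigMax_mul (S : Matrix n n ℝ) (v : n → ℝ) :
    v ⬝ᵥ S *ᵥ v ≤ eigMax S * (v ⬝ᵥ v) := by
  by_cases hv : vecNorm v = 0
  · have : v ⬝ᵥ v = 0 := by rw [dotProduct_self_eq_vecNorm_sq, hv, sq, zero_mul]
    simp [dotProduct_self_eq_zero.mp this]
  · have hu := rayleigh_le_eigMax S (vecNorm_inv_smul_self hv)
    rw [mulVec_smul, dotProduct_smul, smul_dotProduct, smul_eq_mul, smul_eq_mul] at hu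
    rw [dotProduct_self_eq_vecNorm_sq]
    calc v ⬝ᵥ S *ᵥ v
        = (vecNorm v)⁻¹ * ((vecNorm v)⁻¹ * (v ⬝ᵥ S *ᵥ v)) * vecNorm v ^ 2 := by field_simp
      _ ≤ eigMax S * vecNorm v ^ 2 := by gcongr

end Rayleigh

lemma sumElim_dotProduct_fromBlocks_mulVec_sumElim {m n R : Type*} [Fintype m] [Fintype n]
    [CommRing R] (A : Matrix n n R) (D : Matrix m m R) (E : Matrix m n R) (x : n → R)
    (y : m → R) :
    Sum.elim x y ⬝ᵥ fromBlocks A Eᵀ E D *ᵥ Sum.elim x y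
      = x ⬝ᵥ A *ᵥ x + y ⬝ᵥ D *ᵥ y + 2 * (y ⬝ᵥ E *ᵥ x) := by
  have hswap : x ⬝ᵥ Eᵀ *ᵥ y = y ⬝ᵥ E *ᵥ x := by
    rw [mulVec_transpose, dotProduct_comm, ← dotProduct_mulVec]
  rw [fromBlocks_mulVec, Sum.elim_comp_inl, Sum.elim_comp_inr, sumElim_dotProduct_sumElim,
    dotProduct_add, dotProduct_add, hswap]
  ring

lemma two_mul_dotProduct_mulVec_le_eigMax_fromBlocks {m n : Type*} [Fintype m] [Fintype n]
    (D₁ : Matrix n n ℝ) (D₂ : Matrix m m ℝ) (E : Matrix m n ℝ) {x : n → ℝ} {y : m → ℝ}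
    (hx : vecNorm x = 1) (hy : vecNorm y = 1) :
    2 * (y ⬝ᵥ E *ᵥ x) ≤ 2 * eigMax (fromBlocks D₁ Eᵀ E D₂) - eigMin D₁ - eigMin D₂ := by
  have hxy := rayleigh_le_eigMax_mul (fromBlocks D₁ Eᵀ E D₂) (Sum.elim x y)
  rw [sumElim_dotProduct_fromBlocks_mulVec_sumElim, sumElim_dotProduct_sumElim,
    vecNorm_eq_one_iff.mp hx, vecNorm_eq_one_iff.mp hy] at hxy
  linarith [eigMin_le_rayleigh D₁ hx, eigMin_le_rayleigh D₂ hy]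

lemma vecNorm_le_of_forall_dotProduct_le {n : Type*} [Fintype n] {w : n → ℝ} {c : ℝ}
    (hc : 0 ≤ c) (h : ∀ y, vecNorm y = 1 → y ⬝ᵥ w ≤ c) : vecNorm w ≤ c := by
  by_cases hw : vecNorm w = 0
  · rwa [hw]
  · have hdir := h _ (vecNorm_inv_smul_self hw)
    rwa [smul_dotProduct, smul_eq_mul, dotProduct_self_eq_vecNorm_sq, sq, ← mul_assoc,
      inv_mul_cancel₀ hw, one_mul] at hdir

lemma matrixSpectralNorm_le_of_forall_dotProduct_mulVec_le {m n : Type*} [Fintype m]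
    [Fintype n] {A : Matrix m n ℝ} {c : ℝ} (hc : 0 ≤ c)
    (h : ∀ x y, vecNorm x = 1 → vecNorm y = 1 → y ⬝ᵥ A *ᵥ x ≤ c) :
    matrixSpectralNorm A ≤ c :=
  Real.sSup_le
    (by rintro _ ⟨x, hx, rfl⟩; exact vecNorm_le_of_forall_dotProduct_le hc (h x · hx)) hc

theorem offdiagonal_block_bound_general (N : ℕ) (M δ : ℝ) (hM : 0 < M) (hδ : 0 ≤ δ)
    (D₁ D₂ E : Matrix (Fin N) (Fin N) ℝ)
    (hD₁ : M * (1 - δ) ≤ eigMin D₁) (hD₂ : M * (1 - δ) ≤ eigMin D₂)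
    (hT : eigMax (Matrix.fromBlocks D₁ Eᵀ E D₂) ≤ M * (1 + δ)) :
    matrixSpectralNorm E ≤ 2 * M * δ := by
  refine matrixSpectralNorm_le_of_forall_dotProduct_mulVec_le (by positivity) fun x y hx hy => ?_
  have := two_mul_dotProduct_mulVec_le_eigMax_fromBlocks D₁ D₂ E hx hy
  linarith

/-- if the diagonal blocks `D₁, D₂` of the symmetric block matrix
`[[D₁, Eᵀ],[E, D₂]]` have smallest eigenvalues at least `M(1−δ)` and the block matrix
has largest eigenvalue at most `M(1+δ)`, then `‖E‖ ≤ 2Mδ`. -/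
theorem offdiagonal_block_bound (N : ℕ) (hN : 1 ≤ N) (M δ : ℝ) (hM : 0 < M) (hδ : 0 ≤ δ)
    (D₁ D₂ E : Matrix (Fin N) (Fin N) ℝ)
    (hD₁sym : D₁ᵀ = D₁) (hD₂sym : D₂ᵀ = D₂)
    (hD₁ : M * (1 - δ) ≤ eigMin D₁) (hD₂ : M * (1 - δ) ≤ eigMin D₂)
    (hT : eigMax (Matrix.fromBlocks D₁ Eᵀ E D₂) ≤ M * (1 + δ)) :
    matrixSpectralNorm E ≤ 2 * M * δ :=
  offdiagonal_block_bound_general N M δ hM hδ D₁ D₂ E hD₁ hD₂ hT
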